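/- arXiv:1306.4369 — 5 statements merged into one kernel-verified Lean document; each statement's English description precedes it below -/
import Mathlib

section
/- Łukasiewicz logic fails strong completeness: there exist a set S of formulas and a formula α such that S ⊨ α holds but S ⊢ α does not hold. -/
/-!
The `[0, 1]`-valued semantics is the case `G = ℝ`, `u = 1` of the Γ-construction: formulas take
values in the interval `[0, u]` of a linearly ordered abelian group `G`, with
`a → b := min u (u - a + b)`, and the axioms are sound for every such `G`. With `σₙ := ¬X₁ → X₁ⁿ` (strong conjunction power), `σₙ`
is true exactly when `(n + 1) • (u - x) ≤ u`, where `x` is the value of `X₁`. In `ℝ` all `σₙ`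
together force `x = 1` by the Archimedean property; in `ℤ ×ₗ ℤ` with `u = (1, 0)` the value
`x = (1, -1)` lies an infinitesimal below `u`, so all `σₙ` hold while `X₁` does not.
-/

/-- Formulas of Łukasiewicz infinite-valued propositional logic:
propositional variables `var n` (with `X₁ = var 0`), falsum `⊥`, negation, implication. -/
inductive LForm : Type
  | var : ℕ → LForm
  | bot : LForm
  | neg : LForm → LForm
  | imp : LForm → LForm → LForm

namespace LForm

/-- The propositional variable X₁. -/
def X1 : LForm := var 0

/-- Lattice disjunction: α ∨ β := (α → β) → β. -/
def or (α β : LForm) : LForm := imp (imp α β) β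

/-- Lattice conjunction: α ∧ β := ¬(¬α ∨ ¬β). -/
def and (α β : LForm) : LForm := neg (or (neg α) (neg β))

/-- Biconditional: α ↔ β := (α → β) ∧ (β → α). -/
def iff (α β : LForm) : LForm := and (imp α β) (imp β α)

/-- Strong disjunction: α ⊕ β := ¬α → β. -/
def oplus (α β : LForm) : LForm := imp (neg α) β

/-- The predicate "all variables occurring in the formula are X₁". -/
def onlyX1 : LForm → Prop
  | var n => n = 0
  | bot => True
  | neg α => onlyX1 α
  | imp α β => onlyX1 α ∧ onlyX1 β

end LForm

/-- Form₁: the set of formulas built from the single variable X₁ (and ⊥, ¬, →). -/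
def Form1 : Set LForm := { α | α.onlyX1 }

/-- Provability in Łukasiewicz logic from a set `S` of assumptions: the smallest
relation containing the members of `S` and all instances of the axiom schemata
(A0)–(A4), closed under modus ponens. -/
inductive LProv (S : Set LForm) : LForm → Prop
  | hyp {α : LForm} : α ∈ S → LProv S α
  | a0 (α : LForm) : LProv S (LForm.bot.imp α)
  | a1 (α β : LForm) : LProv S (α.imp (β.imp α))
  | a2 (α β γ : LForm) : LProv S ((α.imp β).imp ((β.imp γ).imp (α.imp γ)))
  | a3 (α β : LForm) : LProv S (((α.imp β).imp β).imp ((β.imp α).imp α))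
  | a4 (α β : LForm) : LProv S ((α.neg.imp β.neg).imp (β.imp α))
  | mp {α β : LForm} : LProv S (α.imp β) → LProv S α → LProv S β

/-- A [0,1]-valued evaluation (possible world) for Łukasiewicz logic. -/
structure LEval where
  w : LForm → ℝ
  mem01 : ∀ α, w α ∈ Set.Icc (0 : ℝ) 1
  map_bot : w LForm.bot = 0
  map_neg : ∀ α, w α.neg = 1 - w α
  map_imp : ∀ α β, w (α.imp β) = min 1 (1 - (w α - w β))

/-- Semantic consequence: every evaluation making all of `S` true (value 1)
makes `α` true. -/
def LSem (S : Set LForm) (α : LForm) : Prop :=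
  ∀ v : LEval, (∀ β ∈ S, v.w β = 1) → v.w α = 1

/-- The evaluation determined compositionally by an atomic assignment `v`. -/
def evalFun (v : ℕ → ℝ) : LForm → ℝ
  | .var n => v n
  | .bot => 0
  | .neg α => 1 - evalFun v α
  | .imp α β => min 1 (1 - (evalFun v α - evalFun v β))

/-- Θ_r: the one-variable formulas true (value 1) in every possible world `w`
with `w(X₁) = r`. -/
def Theta (r : ℝ) : Set LForm :=
  { α | α ∈ Form1 ∧ ∀ v : LEval, v.w LForm.X1 = r → v.w α = 1 }

/-- Θ_T: the one-variable formulas true (value 1) in every possible world `w`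
with `w(X₁) ∈ T`. -/
def ThetaT (T : Set ℝ) : Set LForm :=
  { α | α ∈ Form1 ∧ ∀ v : LEval, v.w LForm.X1 ∈ T → v.w α = 1 }

namespace LForm

def sconj (α β : LForm) : LForm := neg (imp α (neg β))

def npow (α : LForm) : ℕ → LForm
  | 0 => neg bot
  | n + 1 => sconj α (npow α n)

def sigma (n : ℕ) : LForm := imp (neg X1) (npow X1 n)

end LForm

section GammaSemantics

variable {G : Type*} [AddCommGroup G] [LinearOrder G] [IsOrderedAddMonoid G] {u : G}

def mvImp (u x y : G) : G := min u (u - x + y)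

lemma mvImp_eq_top_iff {x y : G} : mvImp u x y = u ↔ x ≤ y := by
  rw [mvImp, min_eq_left_iff, show u - x + y = u + (y - x) by abel,
    le_add_iff_nonneg_right, sub_nonneg]

lemma mvImp_of_le {x y : G} (h : y ≤ x) : mvImp u x y = u - x + y := by
  rw [mvImp, min_eq_right_iff, show u - x + y = u + (y - x) by abel,
    add_le_iff_nonpos_right, sub_nonpos]
  exact h

lemma mvImp_nonneg {x y : G} (hu : 0 ≤ u) (hx : x ≤ u) (hy : 0 ≤ y) : 0 ≤ mvImp u x y :=
  le_min hu (add_nonneg (sub_nonneg.2 hx) hy)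

lemma mvImp_mono_right {x y z : G} (h : y ≤ z) : mvImp u x y ≤ mvImp u x z :=
  min_le_min le_rfl (add_le_add_right h _)

lemma mvImp_le_mvImp_mvImp (a b c : G) :
    mvImp u a b ≤ mvImp u (mvImp u b c) (mvImp u a c) := by
  refine le_min (min_le_left _ _) ?_
  rcases le_total b c with hbc | hcb
  · rw [mvImp_eq_top_iff.2 hbc, sub_self, zero_add]
    exact mvImp_mono_right hbc
  · rw [mvImp_of_le hcb]
    rcases le_total a c with hac | hca
    · rw [mvImp_eq_top_iff.2 hac, show u - (u - b + c) + u = u + (b - c) by abel]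
      exact (min_le_left _ _).trans (le_add_of_nonneg_right (sub_nonneg.2 hcb))
    · rw [mvImp_of_le hca, show u - (u - b + c) + (u - a + c) = u - a + b by abel]
      exact min_le_right _ _

lemma mvImp_mvImp_self {a b : G} (ha : a ≤ u) (hb : b ≤ u) :
    mvImp u (mvImp u a b) b = max a b := by
  rcases le_total a b with hab | hba
  · rw [mvImp_eq_top_iff.2 hab, mvImp_of_le hb, max_eq_right hab]
    abel
  · have hb' : b ≤ u - a + b := le_add_of_nonneg_left (sub_nonneg.2 ha)
    rw [mvImp_of_le hba, mvImp_of_le hb', max_eq_left hba]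
    abel

def LForm.valIn (u : G) (e : ℕ → G) : LForm → G
  | .var n => e n
  | .bot => 0
  | .neg α => u - valIn u e α
  | .imp α β => mvImp u (valIn u e α) (valIn u e β)

variable {e : ℕ → G}

lemma LForm.valIn_mem_Icc (hu : 0 ≤ u) (he : ∀ n, e n ∈ Set.Icc 0 u) :
    ∀ α : LForm, α.valIn u e ∈ Set.Icc 0 u
  | .var n => he n
  | .bot => ⟨le_rfl, hu⟩
  | .neg α => by
      obtain ⟨h0, h1⟩ := valIn_mem_Icc hu he α
      exact ⟨sub_nonneg.2 h1, sub_le_self _ h0⟩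
  | .imp α β =>
      ⟨mvImp_nonneg hu (valIn_mem_Icc hu he α).2 (valIn_mem_Icc hu he β).1, min_le_left _ _⟩

theorem LProv.valIn_eq_top (hu : 0 ≤ u) (he : ∀ n, e n ∈ Set.Icc 0 u) {S : Set LForm}
    (hS : ∀ β ∈ S, β.valIn u e = u) {α : LForm} (h : LProv S α) : α.valIn u e = u := by
  have hle (β : LForm) : β.valIn u e ≤ u := (LForm.valIn_mem_Icc hu he β).2
  induction h with
  | hyp hβ => exact hS _ hβ
  | a0 α => exact mvImp_eq_top_iff.2 (LForm.valIn_mem_Icc hu he α).1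
  | a1 α β =>
      refine mvImp_eq_top_iff.2 (le_min (hle α) ?_)
      exact le_add_of_nonneg_left (sub_nonneg.2 (hle β))
  | a2 α β γ => exact mvImp_eq_top_iff.2 (mvImp_le_mvImp_mvImp _ _ _)
  | a3 α β =>
      refine mvImp_eq_top_iff.2 (le_of_eq ?_)
      simp only [LForm.valIn]
      rw [mvImp_mvImp_self (hle α) (hle β), mvImp_mvImp_self (hle β) (hle α), max_comm]
  | a4 α β =>
      refine mvImp_eq_top_iff.2 (le_of_eq ?_)
      simp only [LForm.valIn, mvImp]
      congr 1
      abel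
  | @mp α β _ _ ihαβ ihα =>
      have hαβ : α.valIn u e ≤ β.valIn u e := mvImp_eq_top_iff.1 ihαβ
      exact le_antisymm (hle β) (ihα.ge.trans hαβ)

lemma LForm.valIn_sconj (α β : LForm) :
    (sconj α β).valIn u e = max 0 (α.valIn u e + β.valIn u e - u) := by
  simp only [sconj, valIn, mvImp]
  rw [sub_inf, sub_self]
  congr 1
  abel

lemma LForm.valIn_npow (hu : 0 ≤ u) {α : LForm} (hα : α.valIn u e ≤ u) (n : ℕ) :
    (α.npow n).valIn u e = max 0 (u - n • (u - α.valIn u e)) := by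
  induction n with
  | zero => simpa [npow, valIn] using hu
  | succ n ih =>
      have hα' : α.valIn u e + 0 - u ≤ 0 := by simpa using hα
      rw [npow, valIn_sconj, ih, add_max, sup_sub, ← max_assoc, max_eq_left hα', succ_nsmul]
      congr 1
      abel

lemma le_max_zero_sub_nsmul_iff (hu : 0 ≤ u) {d : G} (n : ℕ) :
    d ≤ max 0 (u - n • d) ↔ (n + 1) • d ≤ u := by
  rcases le_or_gt d 0 with hd | hd
  · exact iff_of_true (hd.trans (le_max_left _ _)) ((nsmul_nonpos hd _).trans hu)
  · rw [le_max_iff, or_iff_right hd.not_ge, le_sub_iff_add_le, succ_nsmul, add_comm]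

lemma LForm.valIn_sigma_eq_top_iff (hu : 0 ≤ u) (he : ∀ n, e n ∈ Set.Icc 0 u) (n : ℕ) :
    (sigma n).valIn u e = u ↔ (n + 1) • (u - e 0) ≤ u := by
  rw [sigma, valIn, mvImp_eq_top_iff, valIn_npow hu (valIn_mem_Icc hu he X1).2]
  exact le_max_zero_sub_nsmul_iff hu n

lemma nonpos_of_forall_succ_nsmul_le [Archimedean G] {d : G} (h : ∀ n : ℕ, (n + 1) • d ≤ u) :
    d ≤ 0 := by
  by_contra! hd
  obtain ⟨n, hn⟩ := exists_lt_nsmul hd u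
  rw [← not_le] at hn
  exact hn ((le_add_of_nonneg_right hd.le).trans ((succ_nsmul d n).symm.le.trans (h n)))

end GammaSemantics

lemma LEval.w_eq_valIn (v : LEval) : ∀ α : LForm, v.w α = α.valIn 1 (fun n => v.w (.var n))
  | .var _ => rfl
  | .bot => v.map_bot
  | .neg α => by rw [v.map_neg, w_eq_valIn v α]; rfl
  | .imp α β => by
      rw [v.map_imp, w_eq_valIn v α, w_eq_valIn v β]
      simp only [LForm.valIn, mvImp]
      ring_nf

lemma lSem_range_sigma_X1 : LSem (Set.range LForm.sigma) LForm.X1 := by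
  intro v hv
  have hσ (n : ℕ) : (n + 1) • (1 - v.w LForm.X1) ≤ 1 := by
    have h := hv _ ⟨n, rfl⟩
    rwa [v.w_eq_valIn, LForm.valIn_sigma_eq_top_iff zero_le_one fun _ => v.mem01 _] at h
  exact le_antisymm (v.mem01 _).2 (sub_nonpos.1 (nonpos_of_forall_succ_nsmul_le hσ))

lemma not_lProv_range_sigma_X1 : ¬ LProv (Set.range LForm.sigma) LForm.X1 := by
  let u : Lex (ℤ × ℤ) := toLex (1, 0)
  let e : ℕ → Lex (ℤ × ℤ) := fun _ => toLex (1, -1)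
  have hu : 0 ≤ u := by decide
  have he (n : ℕ) : e n ∈ Set.Icc 0 u := ⟨by decide, by decide⟩
  have hσ : ∀ β ∈ Set.range LForm.sigma, β.valIn u e = u := by
    rintro _ ⟨n, rfl⟩
    rw [LForm.valIn_sigma_eq_top_iff hu he]
    exact Prod.Lex.le_iff.2 (Or.inl (by simp [u, e]))
  intro h
  exact absurd (h.valIn_eq_top hu he hσ) (by decide)

/-- Łukasiewicz logic fails strong completeness: there are S and α with
S ⊨ α but S ⊬ α. -/
theorem strong_completeness_fails :
    ∃ (S : Set LForm) (α : LForm), LSem S α ∧ ¬ LProv S α :=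
  ⟨_, _, lSem_range_sigma_X1, not_lProv_range_sigma_X1⟩
end

section
/- Adding the tertium non datur schema to Łukasiewicz logic yields classical propositional logic: a formula α is derivable from the axiom schemata (A0)–(A4) together with all instances of the schema β ∨ ¬β (where β ∨ γ abbreviates (β→γ)→γ) via modus ponens if and only if α is a classical two-valued tautology. -/
/-- A classical two-valued evaluation: interprets ⊥, ¬, → by the classical
truth tables. -/
structure CEval where
  w : LForm → Bool
  map_bot : w LForm.bot = false
  map_neg : ∀ α, w α.neg = !(w α)
  map_imp : ∀ α β, w (α.imp β) = (!(w α) || w β)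

/-- Derivability from the Łukasiewicz axiom schemata (A0)–(A4) together with all
instances of the tertium non datur schema β ∨ ¬β, via modus ponens. -/
inductive CProv : LForm → Prop
  | a0 (α : LForm) : CProv (LForm.bot.imp α)
  | a1 (α β : LForm) : CProv (α.imp (β.imp α))
  | a2 (α β γ : LForm) : CProv ((α.imp β).imp ((β.imp γ).imp (α.imp γ)))
  | a3 (α β : LForm) : CProv (((α.imp β).imp β).imp ((β.imp α).imp α))
  | a4 (α β : LForm) : CProv ((α.neg.imp β.neg).imp (β.imp α))
  | tnd (β : LForm) : CProv (β.or β.neg)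
  | mp {α β : LForm} : CProv (α.imp β) → CProv α → CProv β

/-!
Soundness is a truth-table check of each axiom. For completeness, A3 applied to the instance
`(a → ¬a) → ¬a` of tertium non datur gives Clavius' law `(¬a → a) → a`; with A1, A2 and A4 this
yields Peirce's law, hence contraction and the deduction theorem. Kalmár's lemma then derives,
from the literals fixed by a Boolean assignment, each formula or its negation according to its
truth value, and for a tautology the literals are discharged one variable at a time by proof
by cases.
-/

namespace LForm

def boolEval (v : ℕ → Bool) : LForm → Bool
  | var n => v n
  | bot => false
  | neg a => !boolEval v a
  | imp a b => !boolEval v a || boolEval v b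

def signed (v : ℕ → Bool) (φ : LForm) : LForm :=
  if φ.boolEval v then φ else φ.neg

def literal (v : ℕ → Bool) (n : ℕ) : LForm :=
  if v n then var n else (var n).neg

def vars : LForm → List ℕ
  | var n => [n]
  | bot => []
  | neg a => a.vars
  | imp a b => a.vars ++ b.vars

theorem signed_of_boolEval_true {v : ℕ → Bool} {φ : LForm} (h : φ.boolEval v = true) :
    φ.signed v = φ := if_pos h

theorem signed_of_boolEval_false {v : ℕ → Bool} {φ : LForm} (h : φ.boolEval v = false) :
    φ.signed v = φ.neg := if_neg (by simp [h])

theorem literal_update_of_ne (v : ℕ → Bool) {m n : ℕ} (b : Bool) (h : m ≠ n) :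
    literal (Function.update v n b) m = literal v m := by
  simp only [literal, Function.update_of_ne h]

end LForm

open LForm

def CEval.ofAssignment (v : ℕ → Bool) : CEval :=
  ⟨boolEval v, rfl, fun _ => rfl, fun _ _ => rfl⟩

theorem CProv.sound {α : LForm} (h : CProv α) (v : CEval) : v.w α = true := by
  induction h with
  | a0 α => simp [v.map_imp, v.map_bot]
  | a1 α β => simp only [v.map_imp]; cases v.w α <;> cases v.w β <;> rfl
  | a2 α β γ => simp only [v.map_imp]; cases v.w α <;> cases v.w β <;> cases v.w γ <;> rfl
  | a3 α β => simp only [v.map_imp]; cases v.w α <;> cases v.w β <;> rfl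
  | a4 α β => simp only [v.map_imp, v.map_neg]; cases v.w α <;> cases v.w β <;> rfl
  | tnd β => simp only [LForm.or, v.map_imp, v.map_neg]; cases v.w β <;> rfl
  | mp _ _ ih₁ ih₂ => simpa [v.map_imp, ih₂] using ih₁

inductive CProvFrom (Γ : List LForm) : LForm → Prop
  | hyp {α : LForm} : α ∈ Γ → CProvFrom Γ α
  | a0 (α : LForm) : CProvFrom Γ (LForm.bot.imp α)
  | a1 (α β : LForm) : CProvFrom Γ (α.imp (β.imp α))
  | a2 (α β γ : LForm) : CProvFrom Γ ((α.imp β).imp ((β.imp γ).imp (α.imp γ)))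
  | a3 (α β : LForm) : CProvFrom Γ (((α.imp β).imp β).imp ((β.imp α).imp α))
  | a4 (α β : LForm) : CProvFrom Γ ((α.neg.imp β.neg).imp (β.imp α))
  | tnd (β : LForm) : CProvFrom Γ (β.or β.neg)
  | mp {α β : LForm} : CProvFrom Γ (α.imp β) → CProvFrom Γ α → CProvFrom Γ β

theorem CProvFrom.toCProv {α : LForm} (h : CProvFrom [] α) : CProv α := by
  induction h with
  | hyp h => cases h
  | a0 α => exact .a0 α
  | a1 α β => exact .a1 α β
  | a2 α β γ => exact .a2 α β γ
  | a3 α β => exact .a3 α β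
  | a4 α β => exact .a4 α β
  | tnd β => exact .tnd β
  | mp _ _ ih₁ ih₂ => exact .mp ih₁ ih₂

namespace CProvFrom

variable {Γ : List LForm} {a b c : LForm}

theorem mono {Δ : List LForm} (hΓΔ : Γ ⊆ Δ) (h : CProvFrom Γ a) : CProvFrom Δ a := by
  induction h with
  | hyp h => exact hyp (hΓΔ h)
  | a0 α => exact a0 α
  | a1 α β => exact a1 α β
  | a2 α β γ => exact a2 α β γ
  | a3 α β => exact a3 α β
  | a4 α β => exact a4 α β
  | tnd β => exact tnd β
  | mp _ _ ih₁ ih₂ => exact mp ih₁ ih₂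

theorem weaken (h : CProvFrom Γ a) : CProvFrom (b :: Γ) a :=
  mono (List.subset_cons_self b Γ) h

theorem imp_trans (h₁ : CProvFrom Γ (a.imp b)) (h₂ : CProvFrom Γ (b.imp c)) :
    CProvFrom Γ (a.imp c) :=
  mp (mp (a2 a b c) h₁) h₂

theorem clavius : CProvFrom Γ ((a.neg.imp a).imp a) :=
  mp (a3 a a.neg) (tnd a)

theorem exFalso : CProvFrom Γ (a.neg.imp (a.imp b)) :=
  imp_trans (a1 a.neg b.neg) (a4 b a)

theorem imp_self : CProvFrom Γ (a.imp a) :=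
  mp (mp (a2 a (a.neg.imp a) a) (a1 a a.neg)) clavius

theorem peirce : CProvFrom Γ (((a.imp b).imp a).imp a) :=
  imp_trans (mp (a2 a.neg (a.imp b) a) exFalso) clavius

theorem contraction : CProvFrom Γ ((a.imp (a.imp b)).imp (a.imp b)) :=
  imp_trans (a2 a (a.imp b) b) peirce

theorem deduction (h : CProvFrom (a :: Γ) b) : CProvFrom Γ (a.imp b) := by
  induction h with
  | @hyp β h =>
    rcases List.mem_cons.mp h with rfl | h
    · exact imp_self
    · exact mp (a1 β a) (hyp h)
  | a0 α => exact mp (a1 _ a) (a0 α)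
  | a1 α β => exact mp (a1 _ a) (a1 α β)
  | a2 α β γ => exact mp (a1 _ a) (a2 α β γ)
  | a3 α β => exact mp (a1 _ a) (a3 α β)
  | a4 α β => exact mp (a1 _ a) (a4 α β)
  | tnd β => exact mp (a1 _ a) (tnd β)
  | @mp β γ _ _ ih₁ ih₂ => exact mp contraction (imp_trans ih₁ (mp (a2 a β γ) ih₂))

theorem neg_neg_imp : CProvFrom Γ (a.neg.neg.imp a) :=
  imp_trans exFalso clavius

theorem imp_neg_neg : CProvFrom Γ (a.imp a.neg.neg) :=
  mp (a4 a.neg.neg a) neg_neg_imp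

theorem neg_bot : CProvFrom Γ LForm.bot.neg :=
  mp (tnd LForm.bot) (a0 LForm.bot.neg)

theorem modusTollens (hab : CProvFrom Γ (a.imp b)) (hb : CProvFrom Γ b.neg) :
    CProvFrom Γ a.neg :=
  mp (tnd a) (deduction (mp (mp exFalso hb.weaken) (mp hab.weaken (hyp (by simp)))))

theorem neg_imp_of_neg (ha : CProvFrom Γ a) (hb : CProvFrom Γ b.neg) : CProvFrom Γ (a.imp b).neg :=
  modusTollens (deduction (mp (hyp (by simp)) ha.weaken)) hb

theorem byCases (hpos : CProvFrom Γ (b.imp a)) (hneg : CProvFrom Γ (b.neg.imp a)) :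
    CProvFrom Γ a :=
  mp clavius (deduction (mp hneg.weaken (modusTollens hpos.weaken (hyp (by simp)))))

theorem signed_of_literals (v : ℕ → Bool) :
    ∀ φ : LForm, (∀ n ∈ φ.vars, literal v n ∈ Γ) → CProvFrom Γ (φ.signed v)
  | var n, hlits => hyp (hlits n (List.mem_singleton_self n))
  | bot, _ => by
    rw [signed_of_boolEval_false rfl]
    exact neg_bot
  | neg a, hlits => by
    have iha := signed_of_literals v a hlits
    cases ha : a.boolEval v with
    | true =>
      rw [signed_of_boolEval_false (by simp [boolEval, ha])]
      rw [signed_of_boolEval_true ha] at iha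
      exact mp imp_neg_neg iha
    | false =>
      rw [signed_of_boolEval_true (by simp [boolEval, ha])]
      rwa [signed_of_boolEval_false ha] at iha
  | imp a b, hlits => by
    have iha := signed_of_literals v a fun n hn => hlits n (List.mem_append_left _ hn)
    have ihb := signed_of_literals v b fun n hn => hlits n (List.mem_append_right _ hn)
    cases ha : a.boolEval v with
    | false =>
      rw [signed_of_boolEval_true (by simp [boolEval, ha])]
      rw [signed_of_boolEval_false ha] at iha
      exact mp exFalso iha
    | true =>
      rw [signed_of_boolEval_true ha] at iha
      cases hb : b.boolEval v with
      | true =>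
        rw [signed_of_boolEval_true (by simp [boolEval, hb])]
        rw [signed_of_boolEval_true hb] at ihb
        exact mp (a1 b a) ihb
      | false =>
        rw [signed_of_boolEval_false (by simp [boolEval, ha, hb])]
        rw [signed_of_boolEval_false hb] at ihb
        exact neg_imp_of_neg iha ihb

theorem of_forall_literals {α : LForm} :
    ∀ l : List ℕ, l.Nodup → (∀ v, CProvFrom (l.map (literal v)) α) → CProvFrom [] α
  | [], _, h => h fun _ => true
  | n :: l, hnodup, h => by
    obtain ⟨hn, hl⟩ := List.nodup_cons.mp hnodup
    refine of_forall_literals l hl fun v => ?_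
    have hrest (b : Bool) : l.map (literal (Function.update v n b)) = l.map (literal v) :=
      List.map_congr_left fun m hm => literal_update_of_ne v b (ne_of_mem_of_not_mem hm hn)
    have hpos := h (Function.update v n true)
    have hneg := h (Function.update v n false)
    simp only [List.map_cons, hrest, literal, Function.update_self] at hpos hneg
    exact byCases (deduction hpos) (deduction hneg)

end CProvFrom

theorem CProv.complete {α : LForm} (h : ∀ v : CEval, v.w α = true) : CProv α := by
  refine (CProvFrom.of_forall_literals α.vars.dedup α.vars.nodup_dedup fun v => ?_).toCProv
  have hsigned := CProvFrom.signed_of_literals v α fun n hn =>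
    List.mem_map_of_mem (List.mem_dedup.mpr hn)
  rwa [signed_of_boolEval_true (h (CEval.ofAssignment v))] at hsigned

/-- Adding the tertium non datur schema to Łukasiewicz logic yields classical
propositional logic: α is derivable from (A0)–(A4) plus all instances of
β ∨ ¬β via modus ponens iff α is a classical two-valued tautology. -/
theorem lukasiewicz_plus_tnd_is_classical (α : LForm) :
    CProv α ↔ ∀ v : CEval, v.w α = true :=
  ⟨fun h v => h.sound v, CProv.complete⟩
end

section
/- For every r ∈ [0,1], the theory Θ_r is maximally consistent in Ł₁: Θ_r is consistent, and for every formula α ∈ Form₁ with α ∉ Θ_r, the set Θ_r ∪ {α} is inconsistent, i.e., Θ_r ∪ {α} ⊢ β for every β ∈ Form₁. -/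
/-- Iterated implication θₙ = α → (α → ⋯ → (α → ⊥)). -/
def iterImp (α : LForm) : ℕ → LForm
  | 0 => LForm.bot
  | n + 1 => α.imp (iterImp α n)

lemma iterImp_onlyX1 {α : LForm} (h : α.onlyX1) : ∀ n, (iterImp α n).onlyX1
  | 0 => trivial
  | n + 1 => ⟨h, iterImp_onlyX1 h n⟩

lemma evalFun_mem01 (v : ℕ → ℝ) (hv : ∀ n, v n ∈ Set.Icc (0 : ℝ) 1) :
    ∀ α, evalFun v α ∈ Set.Icc (0 : ℝ) 1 := by
  intro α
  induction α with
  | var n => exact hv n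
  | bot => simp [evalFun]
  | neg α ih =>
    simp only [evalFun]
    exact ⟨by linarith [ih.2], by linarith [ih.1]⟩
  | imp α β ih1 ih2 =>
    simp only [evalFun]
    exact ⟨le_min (by norm_num) (by linarith [ih1.2, ih2.1]), min_le_left _ _⟩

/-- The canonical evaluation with value `r` on all variables. -/
def canEval (r : ℝ) (hr : r ∈ Set.Icc (0 : ℝ) 1) : LEval where
  w := evalFun (fun _ => r)
  mem01 := evalFun_mem01 _ (fun _ => hr)
  map_bot := rfl
  map_neg _ := rfl
  map_imp _ _ := rfl

lemma onlyX1_det (v : LEval) :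
    ∀ α : LForm, α.onlyX1 → v.w α = evalFun (fun _ => v.w LForm.X1) α := by
  intro α
  induction α with
  | var n => intro h; subst h; rfl
  | bot => intro _; exact v.map_bot
  | neg α ih => intro h; simp only [evalFun, v.map_neg, ih h]
  | imp α β ih1 ih2 =>
    intro h; simp only [evalFun, v.map_imp, ih1 h.1, ih2 h.2]

lemma soundness {S : Set LForm} {β : LForm} (h : LProv S β) :
    ∀ v : LEval, (∀ γ ∈ S, v.w γ = 1) → v.w β = 1 := by
  induction h with
  | hyp h => exact fun v hv => hv _ h
  | a0 α =>
    intro v _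
    have hα := v.mem01 α
    simp only [v.map_imp, v.map_bot, min_def]
    split_ifs <;> linarith [hα.1, hα.2]
  | a1 α β =>
    intro v _
    have hα := v.mem01 α
    have hβ := v.mem01 β
    simp only [v.map_imp, min_def]
    split_ifs <;> linarith [hα.1, hα.2, hβ.1, hβ.2]
  | a2 α β γ =>
    intro v _
    have hα := v.mem01 α
    have hβ := v.mem01 β
    have hγ := v.mem01 γ
    simp only [v.map_imp, min_def]
    split_ifs <;> linarith [hα.1, hα.2, hβ.1, hβ.2, hγ.1, hγ.2]
  | a3 α β =>
    intro v _
    have hα := v.mem01 α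
    have hβ := v.mem01 β
    simp only [v.map_imp, min_def]
    split_ifs <;> linarith [hα.1, hα.2, hβ.1, hβ.2]
  | a4 α β =>
    intro v _
    have hα := v.mem01 α
    have hβ := v.mem01 β
    simp only [v.map_imp, v.map_neg, min_def]
    split_ifs <;> linarith [hα.1, hα.2, hβ.1, hβ.2]
  | @mp a b h1 h2 ih1 ih2 =>
    intro v hv
    have e1 := ih1 v hv
    have e2 := ih2 v hv
    rw [v.map_imp, e2] at e1
    have hb := v.mem01 b
    rcases le_total 1 (1 - (1 - v.w b)) with h | h
    · linarith [hb.2]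
    · rw [min_eq_right h] at e1; linarith

lemma iterImp_val (v : LEval) (α : LForm) :
    ∀ n : ℕ, v.w (iterImp α n) = min 1 (n * (1 - v.w α)) := by
  have hc := v.mem01 α
  intro n
  induction n with
  | zero => simp [iterImp, v.map_bot]
  | succ n ih =>
    rw [iterImp, v.map_imp, ih]
    push_cast
    rcases le_total 1 ((n : ℝ) * (1 - v.w α)) with h | h
    · rw [min_eq_left h, min_eq_left (by linarith [hc.2]),
        min_eq_left (by nlinarith [hc.2])]
    · rw [min_eq_right h]
      congr 1
      ring

lemma iterImp_bot {S : Set LForm} {α : LForm} (hα : LProv S α) :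
    ∀ n, LProv S (iterImp α n) → LProv S LForm.bot := by
  intro n
  induction n with
  | zero => exact id
  | succ n ih => exact fun h => ih (h.mp hα)

/-- For every r ∈ [0,1], the theory Θ_r is maximally consistent in Ł₁:
its deductive closure is not all of Form₁, and for every α ∈ Form₁ with
α ∉ Θ_r, the set Θ_r ∪ {α} is inconsistent (proves every β ∈ Form₁). -/
theorem Theta_maximally_consistent (r : ℝ) (hr : r ∈ Set.Icc (0 : ℝ) 1) :
    {β | β ∈ Form1 ∧ LProv (Theta r) β} ≠ Form1 ∧
    ∀ α ∈ Form1, α ∉ Theta r → ∀ β ∈ Form1, LProv (Theta r ∪ {α}) β := by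
  let vr : LEval := canEval r hr
  have hX1 : vr.w LForm.X1 = r := rfl
  have hTheta : ∀ γ ∈ Theta r, vr.w γ = 1 := fun γ hγ => hγ.2 vr hX1
  constructor
  · intro h
    have hb : LForm.bot ∈ Form1 := trivial
    rw [← h] at hb
    have h1 := soundness hb.2 vr hTheta
    rw [vr.map_bot] at h1
    norm_num at h1
  · intro α hα hαn β _
    set c := vr.w α with hc
    have hc01 := vr.mem01 α
    have hdet : ∀ v : LEval, v.w LForm.X1 = r → v.w α = c := by
      intro v hv
      rw [onlyX1_det v α hα, hv, hc, onlyX1_det vr α hα, hX1]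
    have hcne : c ≠ 1 := by
      intro h
      exact hαn ⟨hα, fun v hv => by rw [hdet v hv, h]⟩
    have hclt : c < 1 := lt_of_le_of_ne hc01.2 hcne
    have h1c : 0 < 1 - c := by linarith
    obtain ⟨n, hn⟩ := exists_nat_gt (1 / (1 - c))
    have hn1 : 1 ≤ (n : ℝ) * (1 - c) := by
      rw [div_lt_iff₀ h1c] at hn; linarith
    have hθ : iterImp α n ∈ Theta r := by
      refine ⟨iterImp_onlyX1 hα n, ?_⟩
      intro v hv
      rw [iterImp_val v α n, hdet v hv, min_eq_left hn1]
    have hprovα : LProv (Theta r ∪ {α}) α := LProv.hyp (Or.inr rfl)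
    have hprovθ : LProv (Theta r ∪ {α}) (iterImp α n) := LProv.hyp (Or.inl hθ)
    exact (LProv.a0 β).mp (iterImp_bot hprovα n hprovθ)
end

section
/- Separation of truth values by one-variable formulas: for all r, s ∈ [0,1] with r ≠ s, there exists a formula α ∈ Form₁ such that w_r(α) = 1 and w_s(α) < 1. -/
/-- Substitute `β` for every variable of `α`. -/
def lcomp : LForm → LForm → LForm
  | .var _, β => β
  | .bot, _ => .bot
  | .neg α, β => (lcomp α β).neg
  | .imp α γ, β => (lcomp α β).imp (lcomp γ β)

lemma lcomp_onlyX1 (α β : LForm) (hβ : β.onlyX1) : (lcomp α β).onlyX1 := by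
  induction α <;> simp [lcomp, LForm.onlyX1, *]

lemma evalFun_lcomp (v : ℕ → ℝ) (α β : LForm) :
    evalFun v (lcomp α β) = evalFun (fun _ => evalFun v β) α := by
  induction α <;> simp [lcomp, evalFun, *]

/-- `min 1 (2x)`. -/
def lQ : LForm := LForm.oplus LForm.X1 LForm.X1

/-- `max 0 (2x - 1)`. -/
def lT : LForm := ((LForm.X1.neg.neg).imp (LForm.X1.neg)).neg

lemma lQ_onlyX1 : lQ.onlyX1 := by simp [lQ, LForm.oplus, LForm.X1, LForm.onlyX1]

lemma lT_onlyX1 : lT.onlyX1 := by simp [lT, LForm.X1, LForm.onlyX1]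

lemma evalFun_lQ (x : ℝ) : evalFun (fun _ => x) lQ = min 1 (2 * x) := by
  show min 1 (1 - ((1 - x) - x)) = min 1 (2 * x)
  congr 1; ring

lemma evalFun_lT (x : ℝ) : evalFun (fun _ => x) lT = max 0 (2 * x - 1) := by
  show 1 - min 1 (1 - ((1 - (1 - x)) - (1 - x))) = max 0 (2 * x - 1)
  rcases le_total (2 * x - 1) 0 with h | h
  · rw [max_eq_left h, min_eq_left (by linarith)]; ring
  · rw [max_eq_right h, min_eq_right (by linarith)]; ring

/-- Iterated `lQ`: value `min 1 (2^n x)` for `x ∈ [0,1]`. -/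
def lQiter : ℕ → LForm
  | 0 => LForm.X1
  | n + 1 => lcomp lQ (lQiter n)

lemma lQiter_onlyX1 (n : ℕ) : (lQiter n).onlyX1 := by
  induction n with
  | zero => simp [lQiter, LForm.X1, LForm.onlyX1]
  | succ n ih => exact lcomp_onlyX1 _ _ ih

lemma evalFun_lQiter (n : ℕ) (x : ℝ) (hx : 0 ≤ x) (hx1 : x ≤ 1) :
    evalFun (fun _ => x) (lQiter n) = min 1 ((2 : ℝ) ^ n * x) := by
  induction n with
  | zero => show x = min 1 (2 ^ 0 * x); rw [pow_zero, one_mul, min_eq_right hx1]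
  | succ n ih =>
    rw [lQiter, evalFun_lcomp, ih, evalFun_lQ]
    have h2n : (0:ℝ) < 2 ^ n := by positivity
    rcases le_total ((2:ℝ)^n * x) 1 with h | h
    · rw [min_eq_right h]; congr 1; ring
    · rw [min_eq_left h, min_eq_left (by linarith), min_eq_left (by rw [pow_succ]; nlinarith)]

lemma one_le_pow_mul (d : ℝ) (hd : 0 < d) : ∃ n : ℕ, 1 ≤ 2 ^ n * d := by
  obtain ⟨n, hn⟩ := pow_unbounded_of_one_lt d⁻¹ (one_lt_two (α := ℝ))
  refine ⟨n, ?_⟩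
  rw [← inv_mul_cancel₀ hd.ne']
  exact mul_le_mul_of_nonneg_right hn.le hd.le

lemma sep_lt : ∀ n : ℕ, ∀ r s : ℝ, 0 ≤ s → s < r → r ≤ 1 → 1 ≤ 2 ^ n * (r - s) →
    ∃ α : LForm, α.onlyX1 ∧ evalFun (fun _ => r) α = 1 ∧ evalFun (fun _ => s) α < 1 := by
  intro n
  induction n with
  | zero =>
    intro r s hs hsr hr h
    rw [pow_zero, one_mul] at h
    have hr1 : r = 1 := by linarith
    have hs0 : s = 0 := by linarith
    exact ⟨LForm.X1, by simp [LForm.X1, LForm.onlyX1],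
      by simp [LForm.X1, evalFun, hr1], by simp [LForm.X1, evalFun, hs0]⟩
  | succ n ih =>
    intro r s hs hsr hr h
    have hpow : (0:ℝ) < 2 ^ n := by positivity
    rw [pow_succ] at h
    rcases le_or_gt r (1/2) with hr2 | hr2
    · -- double via lQ
      obtain ⟨α, hα1, hα2, hα3⟩ := ih (2*r) (2*s) (by linarith) (by linarith) (by linarith)
        (by nlinarith)
      refine ⟨lcomp α lQ, lcomp_onlyX1 _ _ lQ_onlyX1, ?_, ?_⟩
      · rw [evalFun_lcomp, evalFun_lQ, min_eq_right (by linarith)]; exact hα2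
      · rw [evalFun_lcomp, evalFun_lQ, min_eq_right (by linarith)]; exact hα3
    rcases le_or_gt (1/2) s with hs2 | hs2
    · -- double via lT
      obtain ⟨α, hα1, hα2, hα3⟩ := ih (2*r-1) (2*s-1) (by linarith) (by linarith) (by linarith)
        (by nlinarith)
      refine ⟨lcomp α lT, lcomp_onlyX1 _ _ lT_onlyX1, ?_, ?_⟩
      · rw [evalFun_lcomp, evalFun_lT, max_eq_right (by linarith)]; exact hα2
      · rw [evalFun_lcomp, evalFun_lT, max_eq_right (by linarith)]; exact hα3
    · -- s < 1/2 < r : apply lT then blow up with lQiter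
      have h2r : (0:ℝ) < 2*r - 1 := by linarith
      obtain ⟨m, hm⟩ := one_le_pow_mul (2*r-1) h2r
      refine ⟨lcomp (lQiter m) lT, lcomp_onlyX1 _ _ lT_onlyX1, ?_, ?_⟩
      · rw [evalFun_lcomp, evalFun_lT, max_eq_right (by linarith),
          evalFun_lQiter m _ (by linarith) (by linarith), min_eq_left hm]
      · rw [evalFun_lcomp, evalFun_lT, max_eq_left (by linarith),
          evalFun_lQiter m 0 le_rfl zero_le_one]
        simp

/-- Separation of truth values by one-variable formulas: if r ≠ s in [0,1],
there is α ∈ Form₁ with w_r(α) = 1 and w_s(α) < 1, where w_t is the evaluation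
determined by X₁ ↦ t. -/
theorem separation_of_truth_values (r s : ℝ)
    (hr : r ∈ Set.Icc (0 : ℝ) 1) (hs : s ∈ Set.Icc (0 : ℝ) 1) (hrs : r ≠ s) :
    ∃ α ∈ Form1, evalFun (fun _ => r) α = 1 ∧ evalFun (fun _ => s) α < 1 := by
  obtain ⟨hr0, hr1⟩ := hr
  obtain ⟨hs0, hs1⟩ := hs
  rcases hrs.lt_or_gt with hlt | hlt
  · -- r < s : separate 1 - r > 1 - s and compose with negation
    have hd : (0:ℝ) < s - r := by linarith
    obtain ⟨n, hn⟩ := one_le_pow_mul (s - r) hd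
    have h2 : 1 ≤ 2 ^ n * ((1 - r) - (1 - s)) := by
      calc (1:ℝ) ≤ 2 ^ n * (s - r) := hn
        _ = 2 ^ n * ((1 - r) - (1 - s)) := by ring
    obtain ⟨α, hα1, hα2, hα3⟩ := sep_lt n (1 - r) (1 - s) (by linarith) (by linarith)
      (by linarith) h2
    refine ⟨lcomp α LForm.X1.neg, lcomp_onlyX1 _ _ (by simp [LForm.X1, LForm.onlyX1]),
      ?_, ?_⟩
    · rw [evalFun_lcomp]; simpa [LForm.X1, evalFun] using hα2
    · rw [evalFun_lcomp]; simpa [LForm.X1, evalFun] using hα3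
  · have hd : (0:ℝ) < r - s := by linarith
    obtain ⟨n, h2⟩ := one_le_pow_mul (r - s) hd
    obtain ⟨α, hα1, hα2, hα3⟩ := sep_lt n r s hs0 hlt hr1 h2
    exact ⟨α, hα1, hα2, hα3⟩
end

section
/- Each theory Θ_r has a unique model: for every r ∈ [0,1], if w is an evaluation on Form₁ with w(α)=1 for every α ∈ Θ_r, then w(X₁) = r (hence w = w_r). -/
/-- `doub α` has value `min 1 (2a)` where `a` is the value of `α`. -/
def doub (α : LForm) : LForm := α.neg.imp α

/-- `tmin α` has value `max 0 (2a - 1)` where `a` is the value of `α`. -/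
def tmin (α : LForm) : LForm := (α.imp α.neg).neg

/-- `Fge k m α` has value 1 iff the value of `α` is ≥ k / 2^m. -/
def Fge : ℕ → ℕ → LForm → LForm
  | 0, 0, _ => LForm.bot.neg
  | 1, 0, α => α
  | _+2, 0, _ => LForm.bot
  | k, m+1, α => if k ≤ 2^m then Fge k m (doub α) else Fge (k - 2^m) m (tmin α)

lemma eval_doub (v : ℕ → ℝ) (α : LForm) :
    evalFun v (doub α) = min 1 (2 * evalFun v α) := by
  show min 1 (1 - ((1 - evalFun v α) - evalFun v α)) = _
  congr 1; ring

lemma eval_tmin (v : ℕ → ℝ) (α : LForm) :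
    evalFun v (tmin α) = max 0 (2 * evalFun v α - 1) := by
  show 1 - min 1 (1 - (evalFun v α - (1 - evalFun v α))) = _
  rcases le_total (2 * evalFun v α) 1 with h | h
  · rw [min_eq_left (by linarith), max_eq_left (by linarith)]; ring
  · rw [min_eq_right (by linarith), max_eq_right (by linarith)]; linarith

lemma Fge_onlyX1 (m : ℕ) : ∀ (k : ℕ) (α : LForm), α.onlyX1 → (Fge k m α).onlyX1 := by
  induction m with
  | zero =>
    intro k α h
    match k with
    | 0 => trivial
    | 1 => exact h
    | n+2 => trivial
  | succ m ih =>
    intro k α h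
    rw [Fge]
    split
    · exact ih _ _ ⟨h, h⟩
    · exact ih _ _ ⟨h, h⟩

lemma Fge_val (m : ℕ) : ∀ (k : ℕ) (v : ℕ → ℝ) (α : LForm),
    0 ≤ evalFun v α → evalFun v α ≤ 1 →
    (evalFun v (Fge k m α) = 1 ↔ (k : ℝ) / 2 ^ m ≤ evalFun v α) := by
  induction m with
  | zero =>
    intro k v α h0 h1
    match k with
    | 0 =>
      simp only [Fge, evalFun]
      norm_num
      exact h0
    | 1 =>
      simp only [Fge]
      norm_num
      constructor
      · intro h; linarith
      · intro h; linarith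
    | n+2 =>
      simp only [Fge, evalFun]
      norm_num
      push_cast
      have : (0:ℝ) ≤ (n:ℝ) := Nat.cast_nonneg n
      linarith
  | succ m ih =>
    intro k v α h0 h1
    have h2m : (0:ℝ) < 2 ^ m := by positivity
    have hpow : (2:ℝ) ^ (m+1) = 2 ^ m * 2 := pow_succ 2 m
    rw [Fge]
    split
    case isTrue hk =>
      have hk' : (k:ℝ) ≤ 2 ^ m := by exact_mod_cast hk
      rw [ih k v (doub α) (by rw [eval_doub]; positivity)
        (by rw [eval_doub]; exact min_le_left _ _), eval_doub]
      rw [le_min_iff]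
      constructor
      · rintro ⟨-, h2⟩
        rw [div_le_iff₀ h2m] at h2
        rw [div_le_iff₀ (by positivity)]
        nlinarith
      · intro h2
        rw [div_le_iff₀ (by positivity)] at h2
        refine ⟨by rw [div_le_one h2m]; exact hk', ?_⟩
        rw [div_le_iff₀ h2m]
        nlinarith
    case isFalse hk =>
      push_neg at hk
      have hk1 : 2 ^ m ≤ k := le_of_lt hk
      have hcast : ((k - 2 ^ m : ℕ) : ℝ) = (k:ℝ) - 2 ^ m := by
        push_cast [Nat.cast_sub hk1]; ring
      have hkpos : (0:ℝ) < (k:ℝ) - 2 ^ m := by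
        have : (2:ℝ) ^ m < (k:ℝ) := by exact_mod_cast hk
        linarith
      rw [ih (k - 2 ^ m) v (tmin α) (by rw [eval_tmin]; exact le_max_left _ _)
        (by rw [eval_tmin]; rcases le_total (2 * evalFun v α - 1) 0 with h | h
            · rw [max_eq_left h]; norm_num
            · rw [max_eq_right h]; linarith), eval_tmin, hcast]
      rw [le_max_iff]
      constructor
      · rintro (h2 | h2)
        · exfalso
          have : (0:ℝ) < ((k:ℝ) - 2 ^ m) / 2 ^ m := by positivity
          linarith
        · rw [div_le_iff₀ h2m] at h2
          rw [div_le_iff₀ (by positivity)]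
          nlinarith
      · intro h2
        right
        rw [div_le_iff₀ (by positivity)] at h2
        rw [div_le_iff₀ h2m]
        nlinarith

lemma LEval_eq_evalFun (u : LEval) : ∀ α : LForm, α.onlyX1 →
    u.w α = evalFun (fun _ => u.w LForm.X1) α := by
  intro α h
  induction α with
  | var n => have : n = 0 := h; subst this; rfl
  | bot => rw [u.map_bot]; rfl
  | neg α ih => rw [u.map_neg, ih h]; rfl
  | imp α β iha ihb => rw [u.map_imp, iha h.1, ihb h.2]; rfl

lemma dyadic_approach {x y : ℝ} (hy : 0 ≤ y)
    (h : ∀ k m : ℕ, (k:ℝ)/2^m ≤ y → (k:ℝ)/2^m ≤ x) : y ≤ x := by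
  by_contra hc
  push_neg at hc
  obtain ⟨m, hm⟩ := exists_pow_lt_of_lt_one (sub_pos.2 hc) (by norm_num : (1:ℝ)/2 < 1)
  have h2m : (0:ℝ) < 2 ^ m := by positivity
  have hpow : ((1:ℝ)/2) ^ m = 1 / 2 ^ m := by rw [div_pow, one_pow]
  rw [hpow, div_lt_iff₀ h2m] at hm
  set k := ⌊y * 2 ^ m⌋₊ with hk
  have h1 : (k:ℝ) ≤ y * 2 ^ m := Nat.floor_le (by positivity)
  have h2 : y * 2 ^ m < (k:ℝ) + 1 := Nat.lt_floor_add_one _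
  have h3 : (k:ℝ)/2^m ≤ y := by rw [div_le_iff₀ h2m]; exact h1
  have h4 := h k m h3
  rw [div_le_iff₀ h2m] at h4
  nlinarith

/-- Each theory Θ_r has a unique model: any evaluation making every member of
Θ_r true must send X₁ to r. -/
theorem Theta_unique_model (r : ℝ) (hr : r ∈ Set.Icc (0 : ℝ) 1)
    (v : LEval) (hv : ∀ α ∈ Theta r, v.w α = 1) :
    v.w LForm.X1 = r := by
  have hs := v.mem01 LForm.X1
  have hX1 : LForm.onlyX1 LForm.X1 := rfl
  have hnX1 : LForm.onlyX1 LForm.X1.neg := rfl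
  set s := v.w LForm.X1 with hsdef
  have evX1 : ∀ x : ℝ, evalFun (fun _ => x) LForm.X1 = x := fun _ => rfl
  have evnX1 : ∀ x : ℝ, evalFun (fun _ => x) LForm.X1.neg = 1 - x := fun _ => rfl
  -- lower bound machinery
  have A : ∀ k m : ℕ, (k:ℝ)/2^m ≤ r → (k:ℝ)/2^m ≤ s := by
    intro k m hkr
    have hmem : Fge k m LForm.X1 ∈ Theta r := by
      refine ⟨Fge_onlyX1 m k _ hX1, ?_⟩
      intro u hu
      rw [LEval_eq_evalFun u _ (Fge_onlyX1 m k _ hX1), hu]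
      rw [Fge_val m k (fun _ => r) LForm.X1 (by rw [evX1]; exact hr.1)
        (by rw [evX1]; exact hr.2), evX1]
      exact hkr
    have := hv _ hmem
    rw [LEval_eq_evalFun v _ (Fge_onlyX1 m k _ hX1), ← hsdef] at this
    rw [Fge_val m k (fun _ => s) LForm.X1 (by rw [evX1]; exact hs.1)
      (by rw [evX1]; exact hs.2), evX1] at this
    exact this
  have B : ∀ k m : ℕ, (k:ℝ)/2^m ≤ 1 - r → (k:ℝ)/2^m ≤ 1 - s := by
    intro k m hkr
    have hmem : Fge k m LForm.X1.neg ∈ Theta r := by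
      refine ⟨Fge_onlyX1 m k _ hnX1, ?_⟩
      intro u hu
      rw [LEval_eq_evalFun u _ (Fge_onlyX1 m k _ hnX1), hu]
      rw [Fge_val m k (fun _ => r) LForm.X1.neg (by rw [evnX1]; linarith [hr.2])
        (by rw [evnX1]; linarith [hr.1]), evnX1]
      exact hkr
    have := hv _ hmem
    rw [LEval_eq_evalFun v _ (Fge_onlyX1 m k _ hnX1), ← hsdef] at this
    rw [Fge_val m k (fun _ => s) LForm.X1.neg (by rw [evnX1]; linarith [hs.2])
      (by rw [evnX1]; linarith [hs.1]), evnX1] at this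
    exact this
  have hle : r ≤ s := dyadic_approach hr.1 A
  have hge : 1 - r ≤ 1 - s := dyadic_approach (by linarith [hr.2]) B
  linarith
end
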